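/- arXiv:2102.01361 — 4 statements merged into one kernel-verified Lean document; each statement's English description precedes it below -/
import Mathlib

section
/- For every n ≥ 3 there is a voting instance with n voters and n candidates such that for every ranking π there exists a ranking σ such that exactly n−1 voters prefer σ to π and exactly one voter prefers π to σ. -/
/-- A ranking of `m` candidates: a permutation assigning each candidate its position. -/
abbrev Ranking (m : ℕ) := Equiv.Perm (Fin m)

/-- The Kendall distance: number of unordered pairs of candidates on whose
relative order the two rankings disagree. -/
def kendall {m : ℕ} (π σ : Ranking m) : ℕ :=
  ((Finset.univ : Finset (Fin m × Fin m)).filter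
    (fun p => p.1 < p.2 ∧ ¬ ((π p.1 < π p.2) ↔ (σ p.1 < σ p.2)))).card

/-- Number of voters who strictly prefer `σ` to `π`. -/
def prefCount {m n : ℕ} (prof : Fin n → Ranking m) (σ π : Ranking m) : ℕ :=
  (Finset.univ.filter (fun v => kendall σ (prof v) < kendall π (prof v))).card

/-- `π` is absolutely popular: no ranking is preferred by a strict majority of all voters. -/
def absPop {m n : ℕ} (prof : Fin n → Ranking m) (π : Ranking m) : Prop :=
  ∀ σ : Ranking m, ¬ (2 * prefCount prof σ π > n)

/-- `π` is simply popular: no ranking is preferred by strictly more voters than prefer `π`. -/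
def simPop {m n : ℕ} (prof : Fin n → Ranking m) (π : Ranking m) : Prop :=
  ∀ σ : Ranking m, ¬ (prefCount prof σ π > prefCount prof π σ)

/-- Strict majority of the voters rank `a` before `b`. -/
def maj {m n : ℕ} (prof : Fin n → Ranking m) (a b : Fin m) : Prop :=
  2 * (Finset.univ.filter (fun v => prof v a < prof v b)).card > n

/-- `π` is topologically sorted: it ranks `a` before `b` whenever a strict
majority of voters does. -/
def topSorted {m n : ℕ} (prof : Fin n → Ranking m) (π : Ranking m) : Prop :=
  ∀ a b : Fin m, maj prof a b → π a < π b

/-- `σ` is obtained from `π` by a single swap of candidates occupying adjacent positions. -/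
def adjSwap {m : ℕ} (π σ : Ranking m) : Prop :=
  ∃ i j : Fin m, (i : ℕ) + 1 = (j : ℕ) ∧ σ = π.trans (Equiv.swap i j)

/-- A directed relation is acyclic: no directed cycle. -/
def acyclicRel {α : Type*} (r : α → α → Prop) : Prop :=
  ∀ a, ¬ Relation.TransGen r a a

section helpers

variable {m : ℕ}

private lemma perm_not_lt (ρ : Ranking m) {x y : Fin m} (h : x ≠ y) :
    ¬ (ρ x < ρ y) ↔ ρ y < ρ x := by
  have hne : ρ y ≠ ρ x := fun e => h.symm (ρ.injective e)
  rw [not_lt]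
  exact ⟨fun hle => lt_of_le_of_ne hle hne, le_of_lt⟩

/-- Case v ≠ a : in `t`, candidate `c` sits immediately before `a`;
swapping `a` and `c` in `π` (which ranks `a` before `c`) strictly improves. -/
private lemma kendall_swap_lt (π t : Ranking m) (a c : Fin m) (hac : a ≠ c)
    (hπ : π a < π c) (hca : t c < t a)
    (hadj : ∀ x, x ≠ a → x ≠ c → (t c < t x ↔ t a < t x)) :
    kendall ((Equiv.swap a c).trans π) t < kendall π t := by
  classical
  set σ : Ranking m := (Equiv.swap a c).trans π with hσdef
  have hσa : σ a = π c := by simp [hσdef]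
  have hσc : σ c = π a := by simp [hσdef]
  have hσm : ∀ x, x ≠ a → x ≠ c → σ x = π x := fun x h1 h2 => by
    simp [hσdef, Equiv.trans_apply, Equiv.swap_apply_of_ne_of_ne h1 h2]
  set S : Equiv.Perm (Fin m) := Equiv.swap a c with hSdef
  have hSa : S a = c := Equiv.swap_apply_left a c
  have hSc : S c = a := Equiv.swap_apply_right a c
  have hSm : ∀ x, x ≠ a → x ≠ c → S x = x := fun x h1 h2 =>
    Equiv.swap_apply_of_ne_of_ne h1 h2
  have hσS : ∀ x, σ x = π (S x) := fun x => rfl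
  have hSS : ∀ x, S (S x) = x := fun x => Equiv.swap_apply_self a c x
  set q0 : Fin m × Fin m := if a < c then (a, c) else (c, a) with hq0
  set Fσ := ((Finset.univ : Finset (Fin m × Fin m)).filter
    (fun p => p.1 < p.2 ∧ ¬ ((σ p.1 < σ p.2) ↔ (t p.1 < t p.2)))) with hFσ
  set Fπ := ((Finset.univ : Finset (Fin m × Fin m)).filter
    (fun p => p.1 < p.2 ∧ ¬ ((π p.1 < π p.2) ↔ (t p.1 < t p.2)))) with hFπ
  have hq0mem : q0 ∈ Fπ := by
    rcases lt_or_gt_of_ne hac with h | h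
    · rw [hq0, if_pos h]
      simp only [hFπ, Finset.mem_filter, Finset.mem_univ, true_and]
      exact ⟨h, fun hiff => absurd (hiff.mp hπ) (asymm hca)⟩
    · rw [hq0, if_neg (asymm h)]
      simp only [hFπ, Finset.mem_filter, Finset.mem_univ, true_and]
      exact ⟨h, fun hiff => absurd (hiff.mpr hca) (asymm hπ)⟩
  have hmain : Fσ.card ≤ (Fπ.erase q0).card := by
    apply Finset.card_le_card_of_injOn
      (fun p => if S p.1 < S p.2 then (S p.1, S p.2) else (S p.2, S p.1))
    · intro p hp
      simp only [hFσ, Finset.mem_coe, Finset.mem_filter, Finset.mem_univ, true_and] at hp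
      obtain ⟨hp1, hp2⟩ := hp
      have hpne : p.1 ≠ p.2 := ne_of_lt hp1
      -- p is not the pair {a,c}
      have hnot1 : ¬ (p.1 = a ∧ p.2 = c) := by
        rintro ⟨e1, e2⟩
        apply hp2
        rw [e1, e2, hσa, hσc]
        constructor
        · intro h; exact absurd h (asymm hπ)
        · intro h; exact absurd h (asymm hca)
      have hnot2 : ¬ (p.1 = c ∧ p.2 = a) := by
        rintro ⟨e1, e2⟩
        apply hp2
        rw [e1, e2, hσc, hσa]
        exact ⟨fun _ => hca, fun _ => hπ⟩
      -- t-comparisons are preserved by S on this pair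
      have htS : t p.1 < t p.2 ↔ t (S p.1) < t (S p.2) := by
        by_cases h1a : p.1 = a
        · have h2a : p.2 ≠ a := fun e => hpne (h1a.trans e.symm)
          have h2c : p.2 ≠ c := fun e => hnot1 ⟨h1a, e⟩
          rw [h1a, hSa, hSm p.2 h2a h2c]
          exact (hadj p.2 h2a h2c).symm
        · by_cases h1c : p.1 = c
          · have h2c : p.2 ≠ c := fun e => hpne (h1c.trans e.symm)
            have h2a : p.2 ≠ a := fun e => hnot2 ⟨h1c, e⟩
            rw [h1c, hSc, hSm p.2 h2a h2c]
            exact hadj p.2 h2a h2c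
          · rw [hSm p.1 h1a h1c]
            by_cases h2a : p.2 = a
            · rw [h2a, hSa]
              have e1 : t p.1 < t a ↔ ¬ (t a < t p.1) :=
                (perm_not_lt t (fun e => h1a e.symm)).symm
              have e2 : t p.1 < t c ↔ ¬ (t c < t p.1) :=
                (perm_not_lt t (fun e => h1c e.symm)).symm
              rw [e1, e2]
              exact not_congr (hadj p.1 h1a h1c).symm
            · by_cases h2c : p.2 = c
              · rw [h2c, hSc]
                have e1 : t p.1 < t c ↔ ¬ (t c < t p.1) :=
                  (perm_not_lt t (fun e => h1c e.symm)).symm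
                have e2 : t p.1 < t a ↔ ¬ (t a < t p.1) :=
                  (perm_not_lt t (fun e => h1a e.symm)).symm
                rw [e1, e2]
                exact not_congr (hadj p.1 h1a h1c)
              · rw [hSm p.2 h2a h2c]
      have hSne : S p.1 ≠ S p.2 := fun e => hpne (S.injective e)
      have hD : ¬ ((π (S p.1) < π (S p.2)) ↔ (t (S p.1) < t (S p.2))) := by
        rw [← htS]
        rw [hσS p.1, hσS p.2] at hp2
        exact hp2
      -- membership in the erase
      have hmem : (if S p.1 < S p.2 then (S p.1, S p.2) else (S p.2, S p.1)) ∈ Fπ := by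
        split_ifs with hlt
        · simp only [hFπ, Finset.mem_filter, Finset.mem_univ, true_and]
          exact ⟨hlt, hD⟩
        · have hlt' : S p.2 < S p.1 := (perm_not_lt (Equiv.refl (Fin m)) hSne).mp hlt
          simp only [hFπ, Finset.mem_filter, Finset.mem_univ, true_and]
          refine ⟨hlt', fun hiff => hD ?_⟩
          constructor
          · intro h; by_contra hcon
            have h2 := (perm_not_lt t hSne).mp hcon
            exact absurd (hiff.mpr h2) (asymm h)
          · intro h; by_contra hcon
            have h2 := (perm_not_lt π hSne).mp hcon
            exact absurd (hiff.mp h2) (asymm h)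
      refine Finset.mem_erase.mpr ⟨?_, hmem⟩
      -- the image is not q0
      intro heq
      rcases lt_or_gt_of_ne hac with h | h
      · rw [hq0, if_pos h] at heq
        beta_reduce at heq
        split_ifs at heq with hlt
        · have e1 : S p.1 = a := congrArg Prod.fst heq
          have e2 : S p.2 = c := congrArg Prod.snd heq
          have f1 : p.1 = c := by rw [← hSS p.1, e1, hSa]
          have f2 : p.2 = a := by rw [← hSS p.2, e2, hSc]
          exact hnot2 ⟨f1, f2⟩
        · have e1 : S p.2 = a := congrArg Prod.fst heq
          have e2 : S p.1 = c := congrArg Prod.snd heq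
          have f1 : p.2 = c := by rw [← hSS p.2, e1, hSa]
          have f2 : p.1 = a := by rw [← hSS p.1, e2, hSc]
          exact hnot1 ⟨f2, f1⟩
      · rw [hq0, if_neg (asymm h)] at heq
        beta_reduce at heq
        split_ifs at heq with hlt
        · have e1 : S p.1 = c := congrArg Prod.fst heq
          have e2 : S p.2 = a := congrArg Prod.snd heq
          have f1 : p.1 = a := by rw [← hSS p.1, e1, hSc]
          have f2 : p.2 = c := by rw [← hSS p.2, e2, hSa]
          exact hnot1 ⟨f1, f2⟩
        · have e1 : S p.2 = c := congrArg Prod.fst heq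
          have e2 : S p.1 = a := congrArg Prod.snd heq
          have f1 : p.2 = a := by rw [← hSS p.2, e1, hSc]
          have f2 : p.1 = c := by rw [← hSS p.1, e2, hSa]
          exact hnot2 ⟨f2, f1⟩
    · -- injectivity
      intro p hp q hq hfeq
      simp only [hFσ, Finset.coe_filter, Set.mem_setOf_eq] at hp hq
      have hp1 : p.1 < p.2 := hp.2.1
      have hq1 : q.1 < q.2 := hq.2.1
      simp only at hfeq
      split_ifs at hfeq with h1 h2 h2
      · have e1 : S p.1 = S q.1 := congrArg Prod.fst hfeq
        have e2 : S p.2 = S q.2 := congrArg Prod.snd hfeq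
        exact Prod.ext (S.injective e1) (S.injective e2)
      · have e1 : S p.1 = S q.2 := congrArg Prod.fst hfeq
        have e2 : S p.2 = S q.1 := congrArg Prod.snd hfeq
        have f1 : p.1 = q.2 := S.injective e1
        have f2 : p.2 = q.1 := S.injective e2
        exact absurd (f1 ▸ f2 ▸ hp1) (asymm hq1)
      · have e1 : S p.2 = S q.1 := congrArg Prod.fst hfeq
        have e2 : S p.1 = S q.2 := congrArg Prod.snd hfeq
        have f1 : p.2 = q.1 := S.injective e1
        have f2 : p.1 = q.2 := S.injective e2
        exact absurd (f2 ▸ f1 ▸ hp1) (asymm hq1)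
      · have e1 : S p.2 = S q.2 := congrArg Prod.fst hfeq
        have e2 : S p.1 = S q.1 := congrArg Prod.snd hfeq
        exact Prod.ext (S.injective e2) (S.injective e1)
  calc kendall σ t = Fσ.card := rfl
    _ ≤ (Fπ.erase q0).card := hmain
    _ < Fπ.card := Finset.card_erase_lt_of_mem hq0mem
    _ = kendall π t := rfl

end helpers

section helpers2
variable {m : ℕ}

/-- Case v = a : in `t` candidate `a` is first and `c` is last;
swapping `a` and `c` in `π` strictly worsens. -/
private lemma kendall_lt_swap (π t : Ranking m) (a c : Fin m) (hac : a ≠ c)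
    (hπ : π a < π c)
    (hta : ∀ x, x ≠ a → t a < t x) (htc : ∀ x, x ≠ c → t x < t c) :
    kendall π t < kendall ((Equiv.swap a c).trans π) t := by
  classical
  set σ : Ranking m := (Equiv.swap a c).trans π with hσdef
  have hσa : σ a = π c := by simp [hσdef]
  have hσc : σ c = π a := by simp [hσdef]
  have hσm : ∀ x, x ≠ a → x ≠ c → σ x = π x := fun x h1 h2 => by
    simp [hσdef, Equiv.trans_apply, Equiv.swap_apply_of_ne_of_ne h1 h2]
  set Fσ := ((Finset.univ : Finset (Fin m × Fin m)).filter
    (fun p => p.1 < p.2 ∧ ¬ ((σ p.1 < σ p.2) ↔ (t p.1 < t p.2)))) with hFσ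
  set Fπ := ((Finset.univ : Finset (Fin m × Fin m)).filter
    (fun p => p.1 < p.2 ∧ ¬ ((π p.1 < π p.2) ↔ (t p.1 < t p.2)))) with hFπ
  have hsub : Fπ ⊆ Fσ := by
    intro p hp
    simp only [hFπ, Finset.mem_filter, Finset.mem_univ, true_and] at hp
    obtain ⟨hp1, hp2⟩ := hp
    have hpne : p.1 ≠ p.2 := ne_of_lt hp1
    simp only [hFσ, Finset.mem_filter, Finset.mem_univ, true_and]
    refine ⟨hp1, ?_⟩
    by_cases h1a : p.1 = a
    · by_cases h2c : p.2 = c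
      · exfalso
        apply hp2
        rw [h1a, h2c]
        exact iff_of_true hπ (hta c hac.symm)
      · have h2a : p.2 ≠ a := fun e => hpne (h1a.trans e.symm)
        have hna : ¬ (π a < π p.2) := fun h =>
          hp2 (h1a ▸ iff_of_true h (hta p.2 h2a))
        have hma : π p.2 < π a := (perm_not_lt π (fun e => h2a e.symm)).mp hna
        rw [h1a, hσa, hσm p.2 h2a h2c]
        intro hiff
        exact absurd (hiff.mpr (h1a ▸ hta p.2 h2a)) (asymm (lt_trans hma hπ))
    · by_cases h1c : p.1 = c
      · by_cases h2a : p.2 = a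
        · exfalso
          apply hp2
          rw [h1c, h2a]
          exact iff_of_false (asymm hπ) (asymm (hta c hac.symm))
        · have h2c : p.2 ≠ c := fun e => hpne (h1c.trans e.symm)
          have hcm : π c < π p.2 := by
            by_contra hn
            exact hp2 (h1c ▸ iff_of_false hn (asymm (htc p.2 h2c)))
          rw [h1c, hσc, hσm p.2 h2a h2c]
          intro hiff
          exact absurd (hiff.mp (lt_trans hπ hcm)) (asymm (htc p.2 h2c))
      · by_cases h2a : p.2 = a
        · have hma : π p.1 < π a := by
            by_contra hn
            refine hp2 (h2a ▸ iff_of_false hn ?_)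
            exact asymm (hta p.1 h1a)
          rw [h2a, hσa, hσm p.1 h1a h1c]
          intro hiff
          exact absurd (hiff.mp (lt_trans hma hπ)) (asymm (hta p.1 h1a))
        · by_cases h2c : p.2 = c
          · have hn : ¬ (π p.1 < π c) := fun h =>
              hp2 (h2c ▸ iff_of_true h (htc p.1 h1c))
            have hcm : π c < π p.1 := (perm_not_lt π h1c).mp (h2c ▸ hn)
            rw [h2c, hσc, hσm p.1 h1a h1c]
            intro hiff
            exact absurd (hiff.mpr (h2c ▸ htc p.1 h1c)) (asymm (lt_trans hπ hcm))
          · rw [hσm p.1 h1a h1c, hσm p.2 h2a h2c]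
            exact hp2
  have hne : ∃ x ∈ Fσ, x ∉ Fπ := by
    refine ⟨if a < c then (a, c) else (c, a), ?_, ?_⟩
    · rcases lt_or_gt_of_ne hac with h | h
      · rw [if_pos h]
        simp only [hFσ, Finset.mem_filter, Finset.mem_univ, true_and]
        refine ⟨h, ?_⟩
        rw [hσa, hσc]
        intro hiff
        exact absurd (hiff.mpr (hta c hac.symm)) (asymm hπ)
      · rw [if_neg (asymm h)]
        simp only [hFσ, Finset.mem_filter, Finset.mem_univ, true_and]
        refine ⟨h, ?_⟩
        rw [hσa, hσc]
        intro hiff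
        exact absurd (hiff.mp hπ) (asymm (hta c hac.symm))
    · rcases lt_or_gt_of_ne hac with h | h
      · rw [if_pos h]
        simp only [hFπ, Finset.mem_filter, Finset.mem_univ, true_and]
        intro hcon
        exact hcon.2 (iff_of_true hπ (hta c hac.symm))
      · rw [if_neg (asymm h)]
        simp only [hFπ, Finset.mem_filter, Finset.mem_univ, true_and]
        intro hcon
        exact hcon.2 (iff_of_false (asymm hπ) (asymm (hta c hac.symm)))
  exact Finset.card_lt_card ((Finset.ssubset_iff_of_subset hsub).mpr hne)

end helpers2

open Fin.CommRing

theorem no_eps_popular_ranking :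
    ∀ n : ℕ, 3 ≤ n → ∃ prof : Fin n → Ranking n,
      ∀ π : Ranking n, ∃ σ : Ranking n,
        prefCount prof σ π = n - 1 ∧ prefCount prof π σ = 1 := by
  intro n hn
  obtain ⟨m, rfl⟩ : ∃ m, n = m + 3 := ⟨n - 3, by omega⟩
  refine ⟨fun v => Equiv.subRight v, ?_⟩
  intro π
  have hone : (1 : Fin (m + 3)) ≠ 0 := by
    intro h
    have := congrArg Fin.val h
    simp at this
  -- there is a candidate ranked before its cyclic predecessor
  have hex : ∃ a : Fin (m + 3), π a < π (a - 1) := by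
    by_contra hcon
    push_neg at hcon
    have hstrict : ∀ a : Fin (m + 3), π (a - 1) < π a := by
      intro a
      refine lt_of_le_of_ne (hcon a) fun e => ?_
      exact hone (sub_eq_self.mp (π.injective e))
    have key : ∀ k : ℕ, (π ((0 : Fin (m + 3)) - (k : Fin (m + 3)))).val + k ≤ (π 0).val := by
      intro k
      induction k with
      | zero => simp
      | succ k ih =>
        have h1 : (0 : Fin (m + 3)) - ((k + 1 : ℕ) : Fin (m + 3))
            = ((0 : Fin (m + 3)) - (k : Fin (m + 3))) - 1 := by
          push_cast
          ring
        have h2 := Fin.lt_def.mp (hstrict ((0 : Fin (m + 3)) - (k : Fin (m + 3))))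
        rw [h1]
        omega
    have hfin := key (m + 3)
    rw [Fin.natCast_self] at hfin
    simp at hfin
  obtain ⟨a, hπa⟩ := hex
  set c : Fin (m + 3) := a - 1 with hc
  have hac : a ≠ c := fun e => hone (sub_eq_self.mp e.symm)
  set σ : Ranking (m + 3) := (Equiv.swap a c).trans π with hσdef
  have hA : ∀ v : Fin (m + 3), v ≠ a →
      kendall σ (Equiv.subRight v) < kendall π (Equiv.subRight v) := by
    intro v hv
    have hw : a - v ≠ 0 := sub_ne_zero.mpr fun e => hv e.symm
    have hwv : (a - v).val ≠ 0 := fun h => hw (Fin.ext (by simpa using h))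
    have hcv : c - v = (a - v) - 1 := sub_right_comm a 1 v
    have hval : ((a - v) - 1).val + 1 = (a - v).val := by
      rw [Fin.coe_sub_one, if_neg hw]
      omega
    apply kendall_swap_lt π _ a c hac hπa
    · simp only [Equiv.subRight_apply, hcv, Fin.lt_def]
      omega
    · intro x hxa hxc
      have hne1 : (x - v).val ≠ (a - v).val :=
        fun h => hxa (sub_left_inj.mp (Fin.ext h))
      have hne2 : (x - v).val ≠ (c - v).val :=
        fun h => hxc (sub_left_inj.mp (Fin.ext h))
      rw [hcv] at hne2
      simp only [Equiv.subRight_apply, hcv, Fin.lt_def]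
      omega
  have hB : kendall π (Equiv.subRight a) < kendall σ (Equiv.subRight a) := by
    apply kendall_lt_swap π _ a c hac hπa
    · intro x hx
      simp only [Equiv.subRight_apply, sub_self]
      exact Fin.pos_iff_ne_zero.mpr (sub_ne_zero.mpr hx)
    · intro x hx
      have hca : c - a = -1 := by rw [hc]; ring
      have hne : (x - a).val ≠ (c - a).val :=
        fun h => hx (sub_left_inj.mp (Fin.ext h))
      have hlt : (x - a).val < m + 3 := (x - a).isLt
      rw [hca, Fin.coe_neg_one] at hne
      simp only [Equiv.subRight_apply, hca, Fin.lt_def, Fin.coe_neg_one]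
      omega
  refine ⟨σ, ?_, ?_⟩ <;> rw [prefCount]
  · have hfilter : Finset.univ.filter
        (fun v => kendall σ (Equiv.subRight v) < kendall π (Equiv.subRight v))
        = Finset.univ.erase a := by
      ext v
      simp only [Finset.mem_filter, Finset.mem_univ, true_and, Finset.mem_erase, and_true]
      constructor
      · intro h e
        subst e
        exact absurd h (asymm hB)
      · exact hA v
    rw [hfilter, Finset.card_erase_of_mem (Finset.mem_univ a), Finset.card_univ,
      Fintype.card_fin]
  · have hfilter : Finset.univ.filter
        (fun v => kendall π (Equiv.subRight v) < kendall σ (Equiv.subRight v))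
        = {a} := by
      ext v
      simp only [Finset.mem_filter, Finset.mem_univ, true_and, Finset.mem_singleton]
      constructor
      · intro h
        by_contra hne
        exact absurd h (asymm (hA v hne))
      · intro e
        subst e
        exact hB
    rw [hfilter, Finset.card_singleton]
end

section
/- In a voting instance with exactly 2 voters, a ranking is absolutely popular if and only if it is topologically sorted (it agrees with both voters on every pair of candidates on which the two voters agree). -/
/-! ### Auxiliary lemmas -/

/-- Pairs on which the two voters agree but `σ` disagrees with them. -/
def violCount {m : ℕ} (A B σ : Ranking m) : ℕ :=
  ((Finset.univ : Finset (Fin m × Fin m)).filter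
    (fun p => p.1 < p.2 ∧ ((A p.1 < A p.2) ↔ (B p.1 < B p.2)) ∧
      ¬ ((σ p.1 < σ p.2) ↔ (A p.1 < A p.2)))).card

lemma perm_tricho {m : ℕ} (π : Ranking m) {a b : Fin m} (h : a ≠ b) :
    π a < π b ∨ π b < π a :=
  lt_or_gt_of_ne (fun hc => h (π.injective hc))

lemma kendall_self {m : ℕ} (π : Ranking m) : kendall π π = 0 := by
  simp [kendall]

lemma kendall_comm {m : ℕ} (π σ : Ranking m) : kendall π σ = kendall σ π := by
  unfold kendall
  congr 1
  ext p
  simp only [Finset.mem_filter, Finset.mem_univ, true_and]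
  tauto

lemma kendall_triangle {m : ℕ} (a b c : Ranking m) :
    kendall a c ≤ kendall a b + kendall b c := by
  unfold kendall
  calc _ ≤ ((Finset.univ : Finset (Fin m × Fin m)).filter
      (fun p => p.1 < p.2 ∧ ¬ ((a p.1 < a p.2) ↔ (b p.1 < b p.2))) ∪
      (Finset.univ : Finset (Fin m × Fin m)).filter
      (fun p => p.1 < p.2 ∧ ¬ ((b p.1 < b p.2) ↔ (c p.1 < c p.2)))).card := by
        apply Finset.card_le_card
        intro p hp
        simp only [Finset.mem_filter, Finset.mem_union, Finset.mem_univ, true_and] at *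
        tauto
    _ ≤ _ := Finset.card_union_le _ _

lemma kendall_eq_sum {m : ℕ} (π σ : Ranking m) :
    kendall π σ = ∑ p : Fin m × Fin m,
      (if p.1 < p.2 ∧ ¬ ((π p.1 < π p.2) ↔ (σ p.1 < σ p.2)) then 1 else 0) :=
  Finset.card_filter _ _

lemma violCount_eq_sum {m : ℕ} (A B σ : Ranking m) :
    violCount A B σ = ∑ p : Fin m × Fin m,
      (if p.1 < p.2 ∧ ((A p.1 < A p.2) ↔ (B p.1 < B p.2)) ∧
        ¬ ((σ p.1 < σ p.2) ↔ (A p.1 < A p.2)) then 1 else 0) :=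
  Finset.card_filter _ _

lemma kendall_viol_identity {m : ℕ} (A B σ : Ranking m) :
    kendall σ A + kendall σ B = kendall A B + 2 * violCount A B σ := by
  rw [kendall_eq_sum σ A, kendall_eq_sum σ B, kendall_eq_sum A B, violCount_eq_sum,
    Finset.mul_sum, ← Finset.sum_add_distrib, ← Finset.sum_add_distrib]
  apply Finset.sum_congr rfl
  intro p _
  by_cases hlt : p.1 < p.2
  · simp only [hlt, true_and]
    by_cases hS : σ p.1 < σ p.2 <;> by_cases hA : A p.1 < A p.2 <;>
      by_cases hB : B p.1 < B p.2 <;> simp [hS, hA, hB]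
  · simp [hlt]

lemma violCount_le_left {m : ℕ} (A B σ : Ranking m) : violCount A B σ ≤ kendall σ A := by
  apply Finset.card_le_card
  intro p hp
  simp only [Finset.mem_filter, Finset.mem_univ, true_and] at *
  tauto

lemma violCount_le_right {m : ℕ} (A B σ : Ranking m) : violCount A B σ ≤ kendall σ B := by
  apply Finset.card_le_card
  intro p hp
  simp only [Finset.mem_filter, Finset.mem_univ, true_and] at *
  tauto

lemma swap_lt_iff {m : ℕ} {i j : Fin m} (hij : (i : ℕ) + 1 = (j : ℕ)) {c d : Fin m}
    (h1 : ¬(c = i ∧ d = j)) (h2 : ¬(c = j ∧ d = i)) :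
    (Equiv.swap i j c < Equiv.swap i j d ↔ c < d) := by
  rcases eq_or_ne c i with hc | hci
  · subst hc
    rcases eq_or_ne d c with hd | hdi
    · subst hd; simp
    · rcases eq_or_ne d j with hd | hdj
      · exact absurd ⟨rfl, hd⟩ h1
      · rw [Equiv.swap_apply_left, Equiv.swap_apply_of_ne_of_ne hdi hdj]
        have g1 := Fin.val_ne_of_ne hdi
        have g2 := Fin.val_ne_of_ne hdj
        simp only [Fin.lt_def]; omega
  · rcases eq_or_ne c j with hc | hcj
    · subst hc
      rcases eq_or_ne d i with hd | hdi
      · exact absurd ⟨rfl, hd⟩ h2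
      · rcases eq_or_ne d c with hd | hdj
        · subst hd; simp
        · rw [Equiv.swap_apply_right, Equiv.swap_apply_of_ne_of_ne hdi hdj]
          have g1 := Fin.val_ne_of_ne hdi
          have g2 := Fin.val_ne_of_ne hdj
          simp only [Fin.lt_def]; omega
    · rw [Equiv.swap_apply_of_ne_of_ne hci hcj]
      rcases eq_or_ne d i with hd | hdi
      · subst hd
        rw [Equiv.swap_apply_left]
        have g1 := Fin.val_ne_of_ne hci
        have g2 := Fin.val_ne_of_ne hcj
        simp only [Fin.lt_def]; omega
      · rcases eq_or_ne d j with hd | hdj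
        · subst hd
          rw [Equiv.swap_apply_right]
          have g1 := Fin.val_ne_of_ne hci
          have g2 := Fin.val_ne_of_ne hcj
          simp only [Fin.lt_def]; omega
        · rw [Equiv.swap_apply_of_ne_of_ne hdi hdj]

lemma descend {m : ℕ} (A B : Ranking m) :
    ∀ g : ℕ, ∀ u w : Fin m, (B w : ℕ) - (B u : ℕ) ≤ g → B u < B w → A w < A u →
      ∃ u' w' : Fin m, (B u' : ℕ) + 1 = (B w' : ℕ) ∧ A w' < A u' := by
  intro g
  induction g with
  | zero =>
    intro u w hg hB _
    rw [Fin.lt_def] at hB; omega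
  | succ g ih =>
    intro u w hg hB hA
    by_cases hadj : (B u : ℕ) + 1 = (B w : ℕ)
    · exact ⟨u, w, hadj, hA⟩
    · have hBlt : (B u : ℕ) < (B w : ℕ) := Fin.lt_def.mp hB
      have hm : (B u : ℕ) + 1 < m := by
        have := (B w).isLt; omega
      set c := B.symm ⟨(B u : ℕ) + 1, hm⟩ with hc
      have hBc : (B c : ℕ) = (B u : ℕ) + 1 := by
        rw [hc, Equiv.apply_symm_apply]
      have hcu : c ≠ u := by
        intro h; rw [h] at hBc; omega
      rcases perm_tricho A hcu with h | h
      · exact ⟨u, c, by omega, h⟩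
      · have hAwc : A w < A c := lt_trans hA h
        have hBcw : B c < B w := by rw [Fin.lt_def]; omega
        exact ih c w (by omega) hBcw hAwc

lemma step_lemma {m : ℕ} (A B : Ranking m) (h : 1 ≤ kendall A B) :
    ∃ B' : Ranking m, kendall B' B ≤ 1 ∧ kendall A B' + 1 ≤ kendall A B := by
  obtain ⟨p, hp⟩ := Finset.card_pos.mp h
  rw [Finset.mem_filter] at hp
  obtain ⟨-, hplt, hpiff⟩ := hp
  have hne12 : p.1 ≠ p.2 := ne_of_lt hplt
  obtain ⟨u₀, w₀, hB0, hA0⟩ :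
      ∃ u₀ w₀ : Fin m, B u₀ < B w₀ ∧ A w₀ < A u₀ := by
    by_cases hA1 : A p.1 < A p.2
    · have hBn : ¬ B p.1 < B p.2 := fun hb => hpiff (iff_of_true hA1 hb)
      have hB2 : B p.2 < B p.1 := (perm_tricho B hne12).resolve_left hBn
      exact ⟨p.2, p.1, hB2, hA1⟩
    · have hA2 : A p.2 < A p.1 := (perm_tricho A hne12).resolve_left hA1
      have hB1 : B p.1 < B p.2 := by
        rcases perm_tricho B hne12 with hb | hb
        · exact hb
        · exact absurd (iff_of_false hA1 (lt_asymm hb)) hpiff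
      exact ⟨p.1, p.2, hB1, hA2⟩
  obtain ⟨u, w, hij, hA⟩ := descend A B (B w₀ : ℕ) u₀ w₀ (by omega) hB0 hA0
  have hBuw : B u < B w := Fin.lt_def.mpr (by omega)
  have huw : u ≠ w := fun hh => by rw [hh] at hij; omega
  set B' : Ranking m := B.trans (Equiv.swap (B u) (B w)) with hB'
  have e1 : B' u = B w := by simp [hB', Equiv.trans_apply]
  have e2 : B' w = B u := by simp [hB', Equiv.trans_apply]
  have hkey : ∀ x y : Fin m, ¬(x = u ∧ y = w) → ¬(x = w ∧ y = u) →
      (B' x < B' y ↔ B x < B y) := by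
    intro x y h1 h2
    simp only [hB', Equiv.trans_apply]
    refine swap_lt_iff hij ?_ ?_
    · rintro ⟨q1, q2⟩; exact h1 ⟨B.injective q1, B.injective q2⟩
    · rintro ⟨q1, q2⟩; exact h2 ⟨B.injective q1, B.injective q2⟩
  have hnAuw : ¬ A u < A w := lt_asymm hA
  have hnBwu : ¬ B w < B u := lt_asymm hBuw
  refine ⟨B', ?_, ?_⟩
  · rcases lt_or_gt_of_ne huw with hult | hwlt
    · calc kendall B' B ≤ ({(u, w)} : Finset (Fin m × Fin m)).card := by
            apply Finset.card_le_card
            intro p hp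
            rw [Finset.mem_filter] at hp
            obtain ⟨-, hlt, hne⟩ := hp
            by_cases c1 : p.1 = u ∧ p.2 = w
            · rw [Finset.mem_singleton]; exact Prod.ext c1.1 c1.2
            · by_cases c2 : p.1 = w ∧ p.2 = u
              · exact absurd (c2.1 ▸ c2.2 ▸ hlt) (lt_asymm hult)
              · exact absurd (hkey p.1 p.2 c1 c2) hne
        _ = 1 := Finset.card_singleton _
    · calc kendall B' B ≤ ({(w, u)} : Finset (Fin m × Fin m)).card := by
            apply Finset.card_le_card
            intro p hp
            rw [Finset.mem_filter] at hp
            obtain ⟨-, hlt, hne⟩ := hp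
            by_cases c2 : p.1 = w ∧ p.2 = u
            · rw [Finset.mem_singleton]; exact Prod.ext c2.1 c2.2
            · by_cases c1 : p.1 = u ∧ p.2 = w
              · exact absurd (c1.1 ▸ c1.2 ▸ hlt) (lt_asymm hwlt)
              · exact absurd (hkey p.1 p.2 c1 c2) hne
        _ = 1 := Finset.card_singleton _
  · have hsub : ((Finset.univ : Finset (Fin m × Fin m)).filter
        (fun p => p.1 < p.2 ∧ ¬ ((A p.1 < A p.2) ↔ (B' p.1 < B' p.2)))) ⊆
        ((Finset.univ : Finset (Fin m × Fin m)).filter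
        (fun p => p.1 < p.2 ∧ ¬ ((A p.1 < A p.2) ↔ (B p.1 < B p.2)))) := by
      intro p hp
      rw [Finset.mem_filter] at *
      obtain ⟨hu, hlt, hne⟩ := hp
      by_cases c1 : p.1 = u ∧ p.2 = w
      · exfalso; apply hne
        rw [c1.1, c1.2, e1, e2]
        exact iff_of_false hnAuw hnBwu
      · by_cases c2 : p.1 = w ∧ p.2 = u
        · exfalso; apply hne
          rw [c2.1, c2.2, e1, e2]
          exact iff_of_true hA hBuw
        · exact ⟨hu, hlt, by rwa [hkey p.1 p.2 c1 c2] at hne⟩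
    have hlt : kendall A B' < kendall A B := by
      apply Finset.card_lt_card
      rw [Finset.ssubset_iff_of_subset hsub]
      rcases lt_or_gt_of_ne huw with hult | hwlt
      · refine ⟨(u, w), ?_, ?_⟩
        · rw [Finset.mem_filter]
          exact ⟨Finset.mem_univ _, hult, fun hiff => hnAuw (hiff.mpr hBuw)⟩
        · rw [Finset.mem_filter]
          push_neg
          intro _ _
          rw [e1, e2]
          exact iff_of_false hnAuw hnBwu
      · refine ⟨(w, u), ?_, ?_⟩
        · rw [Finset.mem_filter]
          refine ⟨Finset.mem_univ _, hwlt, fun hiff => hnBwu (hiff.mp hA)⟩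
        · rw [Finset.mem_filter]
          push_neg
          intro _ _
          rw [e1, e2]
          exact iff_of_true hA hBuw
    omega

lemma exists_intermediate {m : ℕ} :
    ∀ k : ℕ, ∀ A B : Ranking m, k ≤ kendall A B →
      ∃ τ : Ranking m, kendall τ B ≤ k ∧ kendall τ A ≤ kendall A B - k := by
  intro k
  induction k with
  | zero =>
    intro A B _
    refine ⟨B, ?_, ?_⟩
    · rw [kendall_self]
    · rw [kendall_comm]; omega
  | succ k ih =>
    intro A B hk
    obtain ⟨B', h1, h2⟩ := step_lemma A B (by omega)
    have htri : kendall A B ≤ kendall A B' + kendall B' B := kendall_triangle A B' B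
    have hk' : k ≤ kendall A B' := by omega
    obtain ⟨τ, ht1, ht2⟩ := ih A B' hk'
    have htri2 : kendall τ B ≤ kendall τ B' + kendall B' B := kendall_triangle τ B' B
    exact ⟨τ, by omega, by omega⟩

lemma prefCount_two {m : ℕ} (prof : Fin 2 → Ranking m) (τ σ : Ranking m) :
    prefCount prof τ σ =
      (if kendall τ (prof 0) < kendall σ (prof 0) then 1 else 0) +
      (if kendall τ (prof 1) < kendall σ (prof 1) then 1 else 0) := by
  unfold prefCount
  rw [Finset.card_filter, Fin.sum_univ_two]

theorem two_voters_absPop_iff_topSorted {m : ℕ} (prof : Fin 2 → Ranking m)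
    (σ : Ranking m) :
    absPop prof σ ↔
      (∀ a b : Fin m, prof 0 a < prof 0 b → prof 1 a < prof 1 b → σ a < σ b) := by
  set A := prof 0 with hA
  set B := prof 1 with hB
  constructor
  · intro habs
    by_contra hts
    push_neg at hts
    obtain ⟨a, b, ha, hb, hs⟩ := hts
    have hab : a ≠ b := fun h => lt_irrefl _ (h ▸ ha)
    have hs' : ¬ σ a < σ b := not_lt.mpr hs
    have hsba : σ b < σ a := (perm_tricho σ hab).resolve_left hs'
    -- violCount A B σ ≥ 1
    have hviol : 1 ≤ violCount A B σ := by
      apply Finset.card_pos.mpr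
      rcases lt_or_gt_of_ne hab with hl | hl
      · refine ⟨(a, b), ?_⟩
        rw [Finset.mem_filter]
        exact ⟨Finset.mem_univ _, hl, iff_of_true ha hb,
          fun hiff => hs' (hiff.mpr ha)⟩
      · refine ⟨(b, a), ?_⟩
        rw [Finset.mem_filter]
        exact ⟨Finset.mem_univ _, hl, iff_of_false (lt_asymm ha) (lt_asymm hb),
          fun hiff => (lt_asymm ha) (hiff.mp hsba)⟩
    have hid := kendall_viol_identity A B σ
    have hle1 := violCount_le_left A B σ
    have hle2 := violCount_le_right A B σ
    obtain ⟨τ, ht1, ht2⟩ := exists_intermediate (kendall σ B - violCount A B σ) A B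
      (by omega)
    apply habs τ
    rw [prefCount_two, ← hA, ← hB, if_pos (by omega), if_pos (by omega)]
    omega
  · intro hts τ
    have hviol : violCount A B σ = 0 := by
      apply Finset.card_eq_zero.mpr
      rw [Finset.filter_eq_empty_iff]
      rintro p -
      rintro ⟨hlt, hiff, hniff⟩
      apply hniff
      by_cases h1 : A p.1 < A p.2
      · exact iff_of_true (hts _ _ h1 (hiff.mp h1)) h1
      · have hne : p.1 ≠ p.2 := ne_of_lt hlt
        have h1' : A p.2 < A p.1 := (perm_tricho A hne).resolve_left h1
        have h2' : B p.2 < B p.1 := by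
          rcases perm_tricho B hne with hb | hb
          · exact absurd (hiff.mpr hb) h1
          · exact hb
        exact iff_of_false (lt_asymm (hts _ _ h1' h2')) h1
    have hidσ := kendall_viol_identity A B σ
    have hidτ := kendall_viol_identity A B τ
    rw [prefCount_two, ← hA, ← hB]
    split_ifs <;> omega
end

section
/- In a voting instance with exactly 3 voters, a ranking is absolutely popular if and only if it is topologically sorted. -/
section ThreeVotersAux

variable {m : ℕ}

private lemma dis_symm (τ ρ : Ranking m) {x y : Fin m} (hxy : x ≠ y) :
    (¬ ((τ x < τ y) ↔ (ρ x < ρ y))) ↔ (¬ ((τ y < τ x) ↔ (ρ y < ρ x))) := by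
  have h1 : (τ x).val ≠ (τ y).val := Fin.val_injective.ne (τ.injective.ne hxy)
  have h2 : (ρ x).val ≠ (ρ y).val := Fin.val_injective.ne (ρ.injective.ne hxy)
  simp only [Fin.lt_def]
  omega

private lemma two_mul_kendall (τ ρ : Ranking m) :
    2 * kendall τ ρ = (Finset.univ.filter
      (fun p : Fin m × Fin m => p.1 ≠ p.2 ∧ ¬ ((τ p.1 < τ p.2) ↔ (ρ p.1 < ρ p.2)))).card := by
  classical
  set D := Finset.univ.filter
      (fun p : Fin m × Fin m => p.1 ≠ p.2 ∧ ¬ ((τ p.1 < τ p.2) ↔ (ρ p.1 < ρ p.2))) with hD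
  set S := Finset.univ.filter
      (fun p : Fin m × Fin m => p.1 < p.2 ∧ ¬ ((τ p.1 < τ p.2) ↔ (ρ p.1 < ρ p.2))) with hS
  have key : (D.filter (fun p : Fin m × Fin m => p.1 < p.2)).card
      + (D.filter (fun p : Fin m × Fin m => ¬ p.1 < p.2)).card = D.card :=
    Finset.card_filter_add_card_filter_not (fun p : Fin m × Fin m => p.1 < p.2)
  have h1 : D.filter (fun p : Fin m × Fin m => p.1 < p.2) = S := by
    ext p
    simp only [hD, hS, Finset.mem_filter, Finset.mem_univ, true_and]
    constructor
    · rintro ⟨⟨hne, hdis⟩, hlt⟩; exact ⟨hlt, hdis⟩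
    · rintro ⟨hlt, hdis⟩; exact ⟨⟨ne_of_lt hlt, hdis⟩, hlt⟩
  have h2 : (D.filter (fun p => ¬ p.1 < p.2)).card = S.card := by
    apply Finset.card_bij' (fun (p : Fin m × Fin m) (_ : p ∈ D.filter (fun p : Fin m × Fin m => ¬ p.1 < p.2)) => Prod.swap p) (fun (p : Fin m × Fin m) (_ : p ∈ S) => Prod.swap p)
    · intro p hp
      simp only [hD, Finset.mem_filter, Finset.mem_univ, true_and] at hp
      obtain ⟨⟨hne, hdis⟩, hnlt⟩ := hp
      have hlt : p.2 < p.1 := by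
        rcases lt_or_gt_of_ne hne with h | h
        · exact absurd h hnlt
        · exact h
      simp only [hS, Finset.mem_filter, Finset.mem_univ, true_and, Prod.swap]
      exact ⟨hlt, (dis_symm τ ρ hne).mp hdis⟩
    · intro p hp
      simp only [hS, Finset.mem_filter, Finset.mem_univ, true_and] at hp
      obtain ⟨hlt, hdis⟩ := hp
      simp only [hD, Finset.mem_filter, Finset.mem_univ, true_and, Prod.swap]
      refine ⟨⟨ne_of_gt hlt, (dis_symm τ ρ (ne_of_lt hlt)).mp hdis⟩, ?_⟩
      exact not_lt_of_gt hlt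
    · intro p _; rfl
    · intro p _; rfl
  rw [h1] at key
  rw [h2] at key
  rw [kendall, ← hS]
  omega

private lemma swap_core (σ ρ : Ranking m) (a b : Fin m)
    (hσ : σ b < σ a) (hρ : ρ a < ρ b) (x y : Fin m) (hxy : x ≠ y)
    (hT : ¬ ((σ (Equiv.swap a b x) < σ (Equiv.swap a b y)) ↔ (ρ x < ρ y)))
    (hS : (σ x < σ y) ↔ (ρ x < ρ y)) :
    (¬ ((σ (Equiv.swap a b x) < σ (Equiv.swap a b y)) ↔
        (ρ (Equiv.swap a b x) < ρ (Equiv.swap a b y))))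
    ∧ ((σ x < σ y) ↔ (ρ (Equiv.swap a b x) < ρ (Equiv.swap a b y))) := by
  have nσ : (σ x).val ≠ (σ y).val := Fin.val_injective.ne (σ.injective.ne hxy)
  have nρ : (ρ x).val ≠ (ρ y).val := Fin.val_injective.ne (ρ.injective.ne hxy)
  rcases eq_or_ne x a with heqx | hxa
  · have ex : Equiv.swap a b x = b := by rw [heqx, Equiv.swap_apply_left]
    have fx1 : (σ x).val = (σ a).val := by rw [heqx]
    have fx2 : (ρ x).val = (ρ a).val := by rw [heqx]
    rcases eq_or_ne y a with heqy | hya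
    · have ey : Equiv.swap a b y = b := by rw [heqy, Equiv.swap_apply_left]
      have fy1 : (σ y).val = (σ a).val := by rw [heqy]
      have fy2 : (ρ y).val = (ρ a).val := by rw [heqy]
      simp only [ex, ey] at hT ⊢
      simp only [Fin.lt_def] at hT hS hσ hρ ⊢
      omega
    rcases eq_or_ne y b with heqy | hyb
    · have ey : Equiv.swap a b y = a := by rw [heqy, Equiv.swap_apply_right]
      have fy1 : (σ y).val = (σ b).val := by rw [heqy]
      have fy2 : (ρ y).val = (ρ b).val := by rw [heqy]
      simp only [ex, ey] at hT ⊢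
      simp only [Fin.lt_def] at hT hS hσ hρ ⊢
      omega
    · have ey : Equiv.swap a b y = y := Equiv.swap_apply_of_ne_of_ne hya hyb
      have ny1 : (σ y).val ≠ (σ a).val := Fin.val_injective.ne (σ.injective.ne hya)
      have ny2 : (σ y).val ≠ (σ b).val := Fin.val_injective.ne (σ.injective.ne hyb)
      have ny3 : (ρ y).val ≠ (ρ a).val := Fin.val_injective.ne (ρ.injective.ne hya)
      have ny4 : (ρ y).val ≠ (ρ b).val := Fin.val_injective.ne (ρ.injective.ne hyb)
      simp only [ex, ey] at hT ⊢
      simp only [Fin.lt_def] at hT hS hσ hρ ⊢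
      omega
  rcases eq_or_ne x b with heqx | hxb
  · have ex : Equiv.swap a b x = a := by rw [heqx, Equiv.swap_apply_right]
    have fx1 : (σ x).val = (σ b).val := by rw [heqx]
    have fx2 : (ρ x).val = (ρ b).val := by rw [heqx]
    rcases eq_or_ne y a with heqy | hya
    · have ey : Equiv.swap a b y = b := by rw [heqy, Equiv.swap_apply_left]
      have fy1 : (σ y).val = (σ a).val := by rw [heqy]
      have fy2 : (ρ y).val = (ρ a).val := by rw [heqy]
      simp only [ex, ey] at hT ⊢
      simp only [Fin.lt_def] at hT hS hσ hρ ⊢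
      omega
    rcases eq_or_ne y b with heqy | hyb
    · have ey : Equiv.swap a b y = a := by rw [heqy, Equiv.swap_apply_right]
      have fy1 : (σ y).val = (σ b).val := by rw [heqy]
      have fy2 : (ρ y).val = (ρ b).val := by rw [heqy]
      simp only [ex, ey] at hT ⊢
      simp only [Fin.lt_def] at hT hS hσ hρ ⊢
      omega
    · have ey : Equiv.swap a b y = y := Equiv.swap_apply_of_ne_of_ne hya hyb
      have ny1 : (σ y).val ≠ (σ a).val := Fin.val_injective.ne (σ.injective.ne hya)
      have ny2 : (σ y).val ≠ (σ b).val := Fin.val_injective.ne (σ.injective.ne hyb)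
      have ny3 : (ρ y).val ≠ (ρ a).val := Fin.val_injective.ne (ρ.injective.ne hya)
      have ny4 : (ρ y).val ≠ (ρ b).val := Fin.val_injective.ne (ρ.injective.ne hyb)
      simp only [ex, ey] at hT ⊢
      simp only [Fin.lt_def] at hT hS hσ hρ ⊢
      omega
  · have ex : Equiv.swap a b x = x := Equiv.swap_apply_of_ne_of_ne hxa hxb
    have nx1 : (σ x).val ≠ (σ a).val := Fin.val_injective.ne (σ.injective.ne hxa)
    have nx2 : (σ x).val ≠ (σ b).val := Fin.val_injective.ne (σ.injective.ne hxb)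
    have nx3 : (ρ x).val ≠ (ρ a).val := Fin.val_injective.ne (ρ.injective.ne hxa)
    have nx4 : (ρ x).val ≠ (ρ b).val := Fin.val_injective.ne (ρ.injective.ne hxb)
    rcases eq_or_ne y a with heqy | hya
    · have ey : Equiv.swap a b y = b := by rw [heqy, Equiv.swap_apply_left]
      have fy1 : (σ y).val = (σ a).val := by rw [heqy]
      have fy2 : (ρ y).val = (ρ a).val := by rw [heqy]
      simp only [ex, ey] at hT ⊢
      simp only [Fin.lt_def] at hT hS hσ hρ ⊢
      omega
    rcases eq_or_ne y b with heqy | hyb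
    · have ey : Equiv.swap a b y = a := by rw [heqy, Equiv.swap_apply_right]
      have fy1 : (σ y).val = (σ b).val := by rw [heqy]
      have fy2 : (ρ y).val = (ρ b).val := by rw [heqy]
      simp only [ex, ey] at hT ⊢
      simp only [Fin.lt_def] at hT hS hσ hρ ⊢
      omega
    · have ey : Equiv.swap a b y = y := Equiv.swap_apply_of_ne_of_ne hya hyb
      simp only [ex, ey] at hT ⊢
      exact absurd hS hT

private lemma kendall_swap_lt_s17 (σ ρ : Ranking m) (a b : Fin m)
    (hσ : σ b < σ a) (hρ : ρ a < ρ b) :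
    kendall ((Equiv.swap a b).trans σ) ρ < kendall σ ρ := by
  classical
  have hab : a ≠ b := by
    intro h; rw [h] at hρ; exact absurd hρ (lt_irrefl _)
  set τ : Ranking m := (Equiv.swap a b).trans σ with hτdef
  have hτ : ∀ z, τ z = σ (Equiv.swap a b z) := fun z => rfl
  set T := Finset.univ.filter
      (fun p : Fin m × Fin m => p.1 ≠ p.2 ∧ ¬ ((τ p.1 < τ p.2) ↔ (ρ p.1 < ρ p.2))) with hTdef
  set S := Finset.univ.filter
      (fun p : Fin m × Fin m => p.1 ≠ p.2 ∧ ¬ ((σ p.1 < σ p.2) ↔ (ρ p.1 < ρ p.2))) with hSdef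
  have hTmem : ∀ p : Fin m × Fin m, p ∈ T ↔
      (p.1 ≠ p.2 ∧ ¬ ((σ (Equiv.swap a b p.1) < σ (Equiv.swap a b p.2)) ↔ (ρ p.1 < ρ p.2))) := by
    intro p
    simp only [hTdef, Finset.mem_filter, Finset.mem_univ, true_and, hτ]
  have hSmem : ∀ p : Fin m × Fin m, p ∈ S ↔
      (p.1 ≠ p.2 ∧ ¬ ((σ p.1 < σ p.2) ↔ (ρ p.1 < ρ p.2))) := by
    intro p
    simp only [hSdef, Finset.mem_filter, Finset.mem_univ, true_and]
  -- the two orientations of the swapped pair are in S but cannot be in T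
  have habS : ((a, b) : Fin m × Fin m) ∈ S := by
    rw [hSmem]
    refine ⟨hab, ?_⟩
    intro h
    exact absurd (h.mpr hρ) (asymm hσ)
  have hbaS : ((b, a) : Fin m × Fin m) ∈ S := by
    rw [hSmem]
    refine ⟨hab.symm, ?_⟩
    intro h
    exact absurd (h.mp hσ) (asymm hρ)
  have habT : ((a, b) : Fin m × Fin m) ∉ T := by
    rw [hTmem]
    rintro ⟨-, h⟩
    simp only [Equiv.swap_apply_left, Equiv.swap_apply_right] at h
    exact h (iff_of_true hσ hρ)
  have hbaT : ((b, a) : Fin m × Fin m) ∉ T := by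
    rw [hTmem]
    rintro ⟨-, h⟩
    simp only [Equiv.swap_apply_left, Equiv.swap_apply_right] at h
    exact h (iff_of_false (asymm hσ) (asymm hρ))
  -- the injection
  set ψ : Fin m × Fin m → Fin m × Fin m :=
    fun p => if ((σ p.1 < σ p.2) ↔ (ρ p.1 < ρ p.2))
      then (Equiv.swap a b p.1, Equiv.swap a b p.2) else p with hψ
  have hswap_self : ∀ z : Fin m, Equiv.swap a b (Equiv.swap a b z) = z := fun z =>
    Equiv.swap_apply_self a b z
  have hmaps : ∀ p ∈ T, ψ p ∈ S \ {((a, b) : Fin m × Fin m), ((b, a) : Fin m × Fin m)} := by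
    intro p hp
    obtain ⟨hne, hdisT⟩ := (hTmem p).mp hp
    rw [Finset.mem_sdiff]
    by_cases hag : (σ p.1 < σ p.2) ↔ (ρ p.1 < ρ p.2)
    · have hcore := swap_core σ ρ a b hσ hρ p.1 p.2 hne hdisT hag
      refine ⟨?_, ?_⟩
      · simp only [hψ, hag, if_true]
        rw [hSmem]
        exact ⟨(Equiv.swap a b).injective.ne hne, hcore.1⟩
      · simp only [hψ, hag, if_true, Finset.mem_insert, Finset.mem_singleton]
        push_neg
        constructor
        · intro h
          have h1 : Equiv.swap a b p.1 = a := congrArg Prod.fst h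
          have h2 : Equiv.swap a b p.2 = b := congrArg Prod.snd h
          have e1 : p.1 = b := by
            have := congrArg (Equiv.swap a b) h1
            rwa [hswap_self, Equiv.swap_apply_left] at this
          have e2 : p.2 = a := by
            have := congrArg (Equiv.swap a b) h2
            rwa [hswap_self, Equiv.swap_apply_right] at this
          have : p = ((b, a) : Fin m × Fin m) := Prod.ext e1 e2
          rw [this] at hp
          exact hbaT hp
        · intro h
          have h1 : Equiv.swap a b p.1 = b := congrArg Prod.fst h
          have h2 : Equiv.swap a b p.2 = a := congrArg Prod.snd h
          have e1 : p.1 = a := by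
            have := congrArg (Equiv.swap a b) h1
            rwa [hswap_self, Equiv.swap_apply_right] at this
          have e2 : p.2 = b := by
            have := congrArg (Equiv.swap a b) h2
            rwa [hswap_self, Equiv.swap_apply_left] at this
          have : p = ((a, b) : Fin m × Fin m) := Prod.ext e1 e2
          rw [this] at hp
          exact habT hp
    · refine ⟨?_, ?_⟩
      · simp only [hψ, hag, if_false]
        rw [hSmem]
        exact ⟨hne, hag⟩
      · simp only [hψ, hag, if_false, Finset.mem_insert, Finset.mem_singleton]
        push_neg
        constructor
        · intro h; rw [h] at hp; exact habT hp
        · intro h; rw [h] at hp; exact hbaT hp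
  have hinj : Set.InjOn ψ (T : Set (Fin m × Fin m)) := by
    intro p hp q hq heq
    have hp' : p ∈ T := hp
    have hq' : q ∈ T := hq
    obtain ⟨hnep, hdisTp⟩ := (hTmem p).mp hp'
    obtain ⟨hneq, hdisTq⟩ := (hTmem q).mp hq'
    by_cases hagp : (σ p.1 < σ p.2) ↔ (ρ p.1 < ρ p.2) <;>
      by_cases hagq : (σ q.1 < σ q.2) ↔ (ρ q.1 < ρ q.2)
    · simp only [hψ, hagp, hagq, if_true] at heq
      have h1 : Equiv.swap a b p.1 = Equiv.swap a b q.1 := congrArg Prod.fst heq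
      have h2 : Equiv.swap a b p.2 = Equiv.swap a b q.2 := congrArg Prod.snd heq
      exact Prod.ext ((Equiv.swap a b).injective h1) ((Equiv.swap a b).injective h2)
    · -- p swapped, q kept : q = (swap p.1, swap p.2)
      exfalso
      simp only [hψ, hagp, hagq, if_true, if_false] at heq
      have hcore := swap_core σ ρ a b hσ hρ p.1 p.2 hnep hdisTp hagp
      have h1 : q.1 = Equiv.swap a b p.1 := (congrArg Prod.fst heq).symm
      have h2 : q.2 = Equiv.swap a b p.2 := (congrArg Prod.snd heq).symm
      rw [h1, h2, hswap_self, hswap_self] at hdisTq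
      exact hdisTq hcore.2
    · -- q swapped, p kept
      exfalso
      simp only [hψ, hagp, hagq, if_true, if_false] at heq
      have hcore := swap_core σ ρ a b hσ hρ q.1 q.2 hneq hdisTq hagq
      have h1 : p.1 = Equiv.swap a b q.1 := congrArg Prod.fst heq
      have h2 : p.2 = Equiv.swap a b q.2 := congrArg Prod.snd heq
      rw [h1, h2, hswap_self, hswap_self] at hdisTp
      exact hdisTp hcore.2
    · simp only [hψ, hagp, hagq, if_false] at heq
      exact heq
  have hpairS : {((a, b) : Fin m × Fin m), ((b, a) : Fin m × Fin m)} ⊆ S := by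
    intro p hp
    simp only [Finset.mem_insert, Finset.mem_singleton] at hp
    rcases hp with rfl | rfl
    · exact habS
    · exact hbaS
  have hpaircard : ({((a, b) : Fin m × Fin m), ((b, a) : Fin m × Fin m)} : Finset (Fin m × Fin m)).card = 2 := by
    rw [Finset.card_insert_of_notMem, Finset.card_singleton]
    simp only [Finset.mem_singleton, Prod.mk.injEq, not_and]
    exact fun h _ => hab h
  have hcardle : T.card ≤ (S \ {((a, b) : Fin m × Fin m), ((b, a) : Fin m × Fin m)}).card :=
    Finset.card_le_card_of_injOn ψ hmaps hinj
  have hsdiff : (S \ {((a, b) : Fin m × Fin m), ((b, a) : Fin m × Fin m)}).card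
      = S.card - 2 := by
    rw [Finset.card_sdiff_of_subset hpairS, hpaircard]
  have hSge : 2 ≤ S.card := hpaircard ▸ Finset.card_le_card hpairS
  have e1 : 2 * kendall τ ρ = T.card := by rw [two_mul_kendall τ ρ, hTdef]
  have e2 : 2 * kendall σ ρ = S.card := by rw [two_mul_kendall σ ρ, hSdef]
  omega



private lemma not_both_disagree (prof : Fin 3 → Ranking m) (σ : Ranking m)
    (hts : topSorted prof σ) {v w : Fin 3} (hvw : v ≠ w) {x y : Fin m} (hxy : x ≠ y) :
    ¬ ((¬ ((σ x < σ y) ↔ (prof v x < prof v y)))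
        ∧ (¬ ((σ x < σ y) ↔ (prof w x < prof w y)))) := by
  classical
  rintro ⟨hv, hw⟩
  have key : ∀ c d : Fin m, σ c < σ d → prof v d < prof v c → prof w d < prof w c → False := by
    intro c d hcd hvd hwd
    have hsub : ({v, w} : Finset (Fin 3)) ⊆
        Finset.univ.filter (fun u => prof u d < prof u c) := by
      intro u hu
      simp only [Finset.mem_insert, Finset.mem_singleton] at hu
      rcases hu with rfl | rfl <;> simp [Finset.mem_filter, hvd, hwd]
    have hcard : 2 ≤ (Finset.univ.filter (fun u => prof u d < prof u c)).card := by
      have h2 : ({v, w} : Finset (Fin 3)).card = 2 := Finset.card_pair hvw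
      calc 2 = ({v, w} : Finset (Fin 3)).card := h2.symm
        _ ≤ _ := Finset.card_le_card hsub
    have hmaj : maj prof d c := by
      unfold maj; omega
    exact absurd (hts d c hmaj) (asymm hcd)
  rcases (σ.injective.ne hxy).lt_or_gt with h | h
  · have hv' : prof v y < prof v x := by
      rcases ((prof v).injective.ne hxy).lt_or_gt with h' | h'
      · exact absurd (iff_of_true h h') hv
      · exact h'
    have hw' : prof w y < prof w x := by
      rcases ((prof w).injective.ne hxy).lt_or_gt with h' | h'
      · exact absurd (iff_of_true h h') hw
      · exact h'
    exact key x y h hv' hw'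
  · have hv' : prof v x < prof v y := by
      rcases ((prof v).injective.ne hxy).lt_or_gt with h' | h'
      · exact h'
      · exact absurd (iff_of_false (asymm h) (asymm h')) hv
    have hw' : prof w x < prof w y := by
      rcases ((prof w).injective.ne hxy).lt_or_gt with h' | h'
      · exact h'
      · exact absurd (iff_of_false (asymm h) (asymm h')) hw
    exact key y x h hv' hw'

private lemma kendall_sum_le (prof : Fin 3 → Ranking m) (σ τ : Ranking m)
    (hts : topSorted prof σ) {v w : Fin 3} (hvw : v ≠ w) :
    kendall σ (prof v) + kendall σ (prof w) ≤ kendall τ (prof v) + kendall τ (prof w) := by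
  classical
  simp only [kendall, Finset.card_filter]
  rw [← Finset.sum_add_distrib, ← Finset.sum_add_distrib]
  apply Finset.sum_le_sum
  intro p _
  by_cases hlt : p.1 < p.2
  · have hxy : p.1 ≠ p.2 := ne_of_lt hlt
    have hM := not_both_disagree prof σ hts hvw hxy
    simp only [hlt, true_and]
    split_ifs <;> first | omega | (exfalso; tauto)
  · simp only [hlt, false_and, if_false]
    omega

end ThreeVotersAux

theorem three_voters_absPop_iff_topSorted {m : ℕ} (prof : Fin 3 → Ranking m)
    (σ : Ranking m) :
    absPop prof σ ↔ topSorted prof σ := by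
  classical
  constructor
  · intro hpop a b hmaj
    by_contra hnot
    have hcard : 2 ≤ (Finset.univ.filter (fun v => prof v a < prof v b)).card := by
      have := hmaj
      unfold maj at this
      omega
    obtain ⟨v0, hv0⟩ := Finset.card_pos.mp (by omega :
      0 < (Finset.univ.filter (fun v => prof v a < prof v b)).card)
    have hv0' : prof v0 a < prof v0 b := (Finset.mem_filter.mp hv0).2
    have hab : a ≠ b := by
      intro h
      rw [h] at hv0'
      exact absurd hv0' (lt_irrefl _)
    have hba : σ b < σ a := ((σ.injective.ne hab).lt_or_gt).resolve_left hnot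
    set τ : Ranking m := (Equiv.swap a b).trans σ with hτ
    have hsub : Finset.univ.filter (fun v => prof v a < prof v b) ⊆
        Finset.univ.filter (fun v => kendall τ (prof v) < kendall σ (prof v)) := by
      intro u hu
      have hu' : prof u a < prof u b := (Finset.mem_filter.mp hu).2
      simp only [Finset.mem_filter, Finset.mem_univ, true_and]
      exact kendall_swap_lt_s17 σ (prof u) a b hba hu'
    have hge : 2 ≤ prefCount prof τ σ := by
      unfold prefCount
      calc 2 ≤ (Finset.univ.filter (fun v => prof v a < prof v b)).card := hcard
        _ ≤ _ := Finset.card_le_card hsub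
    exact hpop τ (by omega)
  · intro hts τ hgt
    have h2 : 1 < (Finset.univ.filter
        (fun v => kendall τ (prof v) < kendall σ (prof v))).card := by
      unfold prefCount at hgt
      omega
    obtain ⟨v, hv, w, hw, hvw⟩ := Finset.one_lt_card.mp h2
    have hv' : kendall τ (prof v) < kendall σ (prof v) := (Finset.mem_filter.mp hv).2
    have hw' : kendall τ (prof w) < kendall σ (prof w) := (Finset.mem_filter.mp hw).2
    have := kendall_sum_le prof σ τ hts hvw
    omega
end

section
/- In a voting instance with 4 voters whose majority graph is an acyclic tournament, the unique topologically sorted ranking is the unique absolutely popular ranking. -/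
section aux

variable {m n : ℕ} {prof : Fin n → Ranking m}

lemma maj_irrefl (hacyc : acyclicRel (maj prof)) (a : Fin m) : ¬ maj prof a a :=
  fun h => hacyc a (.single h)

lemma maj_asymm (hacyc : acyclicRel (maj prof)) {a b : Fin m}
    (h1 : maj prof a b) (h2 : maj prof b a) : False :=
  hacyc a (.head h1 (.single h2))

lemma maj_trans (htour : ∀ a b : Fin m, a ≠ b → maj prof a b ∨ maj prof b a)
    (hacyc : acyclicRel (maj prof)) {a b c : Fin m}
    (h1 : maj prof a b) (h2 : maj prof b c) : maj prof a c := by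
  have hac : a ≠ c := by rintro rfl; exact maj_asymm hacyc h1 h2
  rcases htour a c hac with h | h
  · exact h
  · exact (hacyc a (Relation.TransGen.head h1
      (Relation.TransGen.head h2 (.single h)))).elim

open Classical in
/-- the rank function of the majority order -/
noncomputable def rk (prof : Fin n → Ranking m)
    (hacyc : acyclicRel (maj prof)) (a : Fin m) : Fin m :=
  ⟨((Finset.univ : Finset (Fin m)).filter (fun b => maj prof b a)).card, by
    have h : ((Finset.univ : Finset (Fin m)).filter (fun b => maj prof b a)) ⊆
        Finset.univ.erase a := by
      intro c hc
      simp only [Finset.mem_filter] at hc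
      refine Finset.mem_erase.2 ⟨?_, Finset.mem_univ c⟩
      rintro rfl
      exact maj_irrefl hacyc _ hc.2
    calc _ ≤ (Finset.univ.erase a).card := Finset.card_le_card h
    _ < Finset.univ.card := Finset.card_erase_lt_of_mem (Finset.mem_univ a)
    _ = m := by simp⟩

open Classical in
lemma rk_mono (htour : ∀ a b : Fin m, a ≠ b → maj prof a b ∨ maj prof b a)
    (hacyc : acyclicRel (maj prof)) {a b : Fin m} (h : maj prof a b) :
    rk prof hacyc a < rk prof hacyc b := by
  have hsub : insert a ((Finset.univ : Finset (Fin m)).filter (fun c => maj prof c a)) ⊆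
      Finset.univ.filter (fun c => maj prof c b) := by
    intro c hc
    rcases Finset.mem_insert.1 hc with rfl | hc
    · exact Finset.mem_filter.2 ⟨Finset.mem_univ c, h⟩
    · exact Finset.mem_filter.2 ⟨Finset.mem_univ c,
        maj_trans htour hacyc (Finset.mem_filter.1 hc).2 h⟩
  have hna : a ∉ (Finset.univ : Finset (Fin m)).filter (fun c => maj prof c a) := by
    simp [maj_irrefl hacyc a]
  have := Finset.card_le_card hsub
  rw [Finset.card_insert_of_notMem hna] at this
  exact Fin.mk_lt_mk.2 this

/-- the topological ranking -/
noncomputable def topPerm (prof : Fin n → Ranking m)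
    (htour : ∀ a b : Fin m, a ≠ b → maj prof a b ∨ maj prof b a)
    (hacyc : acyclicRel (maj prof)) : Ranking m := by
  refine Equiv.ofBijective (rk prof hacyc) ?_
  refine (Finite.injective_iff_bijective).1 ?_
  intro a b hab
  by_contra hne
  rcases htour a b hne with h | h
  · exact absurd hab (rk_mono htour hacyc h).ne
  · exact absurd hab.symm (rk_mono htour hacyc h).ne

lemma topPerm_mono (prof : Fin n → Ranking m)
    (htour : ∀ a b : Fin m, a ≠ b → maj prof a b ∨ maj prof b a)
    (hacyc : acyclicRel (maj prof)) {a b : Fin m} (h : maj prof a b) :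
    topPerm prof htour hacyc a < topPerm prof htour hacyc b :=
  rk_mono htour hacyc h

/-- two rankings with the same order comparisons agree -/
lemma perm_eq_of_lt_iff (π τ : Ranking m)
    (h : ∀ a b : Fin m, π a < π b ↔ τ a < τ b) : π = τ := by
  have hmono : StrictMono (fun i => τ (π.symm i)) := by
    intro i j hij
    exact (h (π.symm i) (π.symm j)).1 (by simpa using hij)
  have hid : StrictMono (id : Fin m → Fin m) := strictMono_id
  have hrange : Set.range (fun i => τ (π.symm i)) = Set.range (id : Fin m → Fin m) := by
    simp only [Set.range_id]
    exact Set.range_eq_univ.2 fun x => ⟨π (τ.symm x), by simp⟩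
  have : (fun i => τ (π.symm i)) = (id : Fin m → Fin m) :=
    (hmono.range_inj hid).1 hrange
  ext a
  have h2 := congrFun this (π a)
  simp only [Equiv.symm_apply_apply, id_eq] at h2
  exact (congrArg Fin.val h2).symm

/-- the disagreement set of two rankings -/
def Dset {m : ℕ} (π σ : Ranking m) : Finset (Fin m × Fin m) :=
  (Finset.univ : Finset (Fin m × Fin m)).filter
    (fun p => p.1 < p.2 ∧ ¬ ((π p.1 < π p.2) ↔ (σ p.1 < σ p.2)))

lemma kendall_eq_Dset {m : ℕ} (π σ : Ranking m) : kendall π σ = (Dset π σ).card := rfl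

lemma kendall_decomp {m : ℕ} (π σ ρ : Ranking m) :
    kendall σ ρ +
      ((Dset π σ).filter (fun p => ¬ ((π p.1 < π p.2) ↔ (ρ p.1 < ρ p.2)))).card
    = kendall π ρ +
      ((Dset π σ).filter (fun p => (π p.1 < π p.2) ↔ (ρ p.1 < ρ p.2))).card := by
  classical
  have h1 : ((Dset σ ρ).filter (· ∈ Dset π σ)).card
      + ((Dset σ ρ).filter (· ∉ Dset π σ)).card = kendall σ ρ := by
    rw [kendall_eq_Dset]
    exact Finset.card_filter_add_card_filter_not _
  have h2 : ((Dset π ρ).filter (· ∈ Dset π σ)).card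
      + ((Dset π ρ).filter (· ∉ Dset π σ)).card = kendall π ρ := by
    rw [kendall_eq_Dset]
    exact Finset.card_filter_add_card_filter_not _
  have e1 : (Dset σ ρ).filter (· ∈ Dset π σ)
      = (Dset π σ).filter (fun p => (π p.1 < π p.2) ↔ (ρ p.1 < ρ p.2)) := by
    ext p
    simp only [Dset, Finset.mem_filter, Finset.mem_univ, true_and]
    tauto
  have e2 : (Dset σ ρ).filter (· ∉ Dset π σ)
      = (Dset π ρ).filter (· ∉ Dset π σ) := by
    ext p
    simp only [Dset, Finset.mem_filter, Finset.mem_univ, true_and, not_and, not_not]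
    tauto
  have e3 : (Dset π ρ).filter (· ∈ Dset π σ)
      = (Dset π σ).filter (fun p => ¬ ((π p.1 < π p.2) ↔ (ρ p.1 < ρ p.2))) := by
    ext p
    simp only [Dset, Finset.mem_filter, Finset.mem_univ, true_and]
    tauto
  rw [e1] at h1
  rw [e3] at h2
  rw [e2] at h1
  omega

lemma Dset_swap {m : ℕ} (π : Ranking m) {x y : Fin m}
    (hadj : (π x : ℕ) + 1 = (π y : ℕ)) :
    Dset π ((Equiv.swap x y).trans π)
      = ({(x, y), (y, x)} : Finset (Fin m × Fin m)).filter (fun p => p.1 < p.2) := by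
  have hxy : x ≠ y := by
    intro h; subst h; omega
  have hval : ∀ a b : Fin m, a ≠ b → (π a : ℕ) ≠ (π b : ℕ) :=
    fun a b hab h => hab (π.injective (Fin.val_injective h))
  have hiffL : ∀ e : Fin m, e ≠ x → e ≠ y → ((π x < π e) ↔ (π y < π e)) := by
    intro e h1 h2
    have k1 := hval e x h1
    have k2 := hval e y h2
    rw [Fin.lt_def, Fin.lt_def]
    omega
  have hiffR : ∀ e : Fin m, e ≠ x → e ≠ y → ((π e < π x) ↔ (π e < π y)) := by
    intro e h1 h2
    have k1 := hval e x h1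
    have k2 := hval e y h2
    rw [Fin.lt_def, Fin.lt_def]
    omega
  ext ⟨c, d⟩
  simp only [Dset, Finset.mem_filter, Finset.mem_univ, true_and]
  simp only [Dset, Finset.mem_filter, Finset.mem_univ, true_and, Equiv.trans_apply,
    Finset.mem_insert, Finset.mem_singleton, Prod.mk.injEq]
  constructor
  · rintro ⟨hcd, hdis⟩
    refine ⟨?_, hcd⟩
    by_contra hcon
    push_neg at hcon
    obtain ⟨hcon1, hcon2⟩ := hcon
    apply hdis
    have hne : c ≠ d := ne_of_lt hcd
    rcases eq_or_ne c x with hcx | hcx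
    · rcases eq_or_ne d y with hdy | hdy
      · exact (hcon1 hcx hdy).elim
      · have hdx : d ≠ x := fun h => hne (hcx.trans h.symm)
        rw [hcx, Equiv.swap_apply_left, Equiv.swap_apply_of_ne_of_ne hdx hdy]
        exact hiffL d hdx hdy
    · rcases eq_or_ne c y with hcy | hcy
      · rcases eq_or_ne d x with hdx | hdx
        · exact (hcon2 hcy hdx).elim
        · have hdy : d ≠ y := fun h => hne (hcy.trans h.symm)
          rw [hcy, Equiv.swap_apply_right, Equiv.swap_apply_of_ne_of_ne hdx hdy]
          exact (hiffL d hdx hdy).symm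
      · rw [Equiv.swap_apply_of_ne_of_ne hcx hcy]
        rcases eq_or_ne d x with hdx | hdx
        · rw [hdx, Equiv.swap_apply_left]
          exact hiffR c hcx hcy
        · rcases eq_or_ne d y with hdy | hdy
          · rw [hdy, Equiv.swap_apply_right]
            exact (hiffR c hcx hcy).symm
          · rw [Equiv.swap_apply_of_ne_of_ne hdx hdy]
  · rintro ⟨h | h, hcd⟩ <;> obtain ⟨rfl, rfl⟩ := h <;> refine ⟨hcd, ?_⟩ <;>
      simp only [Equiv.swap_apply_left, Equiv.swap_apply_right] <;>
      rw [Fin.lt_def, Fin.lt_def] <;> omega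

end aux

theorem four_voters_acyclic_tournament {m : ℕ} (prof : Fin 4 → Ranking m)
    (htour : ∀ a b : Fin m, a ≠ b → maj prof a b ∨ maj prof b a)
    (hacyc : acyclicRel (maj prof)) :
    (∃! π : Ranking m, topSorted prof π) ∧
    (∀ π : Ranking m, topSorted prof π ↔ absPop prof π) := by
  classical
  have hforward : ∀ π : Ranking m, topSorted prof π → absPop prof π := by
    intro π hts σ hcon
    set D := Dset π σ with hDdef
    set A : Fin 4 → ℕ := fun v =>
      (D.filter (fun p => (π p.1 < π p.2) ↔ (prof v p.1 < prof v p.2))).card with hA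
    set B : Fin 4 → ℕ := fun v =>
      (D.filter (fun p => ¬ ((π p.1 < π p.2) ↔ (prof v p.1 < prof v p.2)))).card with hB
    have hk : ∀ v, kendall σ (prof v) + B v = kendall π (prof v) + A v := by
      intro v
      simp only [hA, hB, hDdef]
      exact kendall_decomp π σ (prof v)
    have hABsum : ∀ v, A v + B v = D.card := by
      intro v
      simp only [hA, hB]
      exact Finset.card_filter_add_card_filter_not _
    have hpair : ∀ p ∈ D,
        (Finset.univ.filter (fun v : Fin 4 =>
          ¬ ((π p.1 < π p.2) ↔ (prof v p.1 < prof v p.2)))).card ≤ 1 := by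
      intro p hp
      have hp12 : p.1 < p.2 := by
        rw [hDdef] at hp
        simp only [Dset, Finset.mem_filter] at hp
        exact hp.2.1
      rcases htour p.1 p.2 (ne_of_lt hp12) with h | h
      · have hπ : π p.1 < π p.2 := hts _ _ h
        have h3 : 3 ≤ (Finset.univ.filter
            (fun v : Fin 4 => prof v p.1 < prof v p.2)).card := by
          have h' : 2 * (Finset.univ.filter
              (fun v : Fin 4 => prof v p.1 < prof v p.2)).card > 4 := h
          omega
        have hsplit := Finset.card_filter_add_card_filter_not
          (s := (Finset.univ : Finset (Fin 4)))
          (p := fun v : Fin 4 => prof v p.1 < prof v p.2)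
        have hsub : Finset.univ.filter (fun v : Fin 4 =>
              ¬ ((π p.1 < π p.2) ↔ (prof v p.1 < prof v p.2)))
            ⊆ Finset.univ.filter (fun v : Fin 4 => ¬ (prof v p.1 < prof v p.2)) := by
          intro v hv
          simp only [Finset.mem_filter, Finset.mem_univ, true_and] at hv ⊢
          tauto
        have hle := Finset.card_le_card hsub
        simp only [Finset.card_univ, Fintype.card_fin] at hsplit
        omega
      · have hπ : π p.2 < π p.1 := hts _ _ h
        have hπ' : ¬ (π p.1 < π p.2) := lt_asymm hπ
        have h3 : 3 ≤ (Finset.univ.filter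
            (fun v : Fin 4 => prof v p.2 < prof v p.1)).card := by
          have h' : 2 * (Finset.univ.filter
              (fun v : Fin 4 => prof v p.2 < prof v p.1)).card > 4 := h
          omega
        have hsplit := Finset.card_filter_add_card_filter_not
          (s := (Finset.univ : Finset (Fin 4)))
          (p := fun v : Fin 4 => prof v p.2 < prof v p.1)
        have hsub : Finset.univ.filter (fun v : Fin 4 =>
              ¬ ((π p.1 < π p.2) ↔ (prof v p.1 < prof v p.2)))
            ⊆ Finset.univ.filter (fun v : Fin 4 => ¬ (prof v p.2 < prof v p.1)) := by
          intro v hv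
          simp only [Finset.mem_filter, Finset.mem_univ, true_and] at hv ⊢
          intro hlt
          exact hv (iff_of_false hπ' (lt_asymm hlt))
        have hle := Finset.card_le_card hsub
        simp only [Finset.card_univ, Fintype.card_fin] at hsplit
        omega
    have hBsum : (∑ v : Fin 4, B v) ≤ D.card := by
      calc (∑ v : Fin 4, B v)
          = ∑ v : Fin 4, ∑ p ∈ D,
              (if ¬ ((π p.1 < π p.2) ↔ (prof v p.1 < prof v p.2)) then 1 else 0) := by
            refine Finset.sum_congr rfl fun v _ => ?_
            simp only [hB]
            exact Finset.card_filter _ _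
        _ = ∑ p ∈ D, ∑ v : Fin 4,
              (if ¬ ((π p.1 < π p.2) ↔ (prof v p.1 < prof v p.2)) then 1 else 0) :=
            Finset.sum_comm
        _ = ∑ p ∈ D, (Finset.univ.filter (fun v : Fin 4 =>
              ¬ ((π p.1 < π p.2) ↔ (prof v p.1 < prof v p.2)))).card :=
            Finset.sum_congr rfl fun p _ => (Finset.card_filter _ _).symm
        _ ≤ ∑ _p ∈ D, 1 := Finset.sum_le_sum hpair
        _ = D.card := by simp
    set S := Finset.univ.filter
      (fun v : Fin 4 => kendall σ (prof v) < kendall π (prof v)) with hSdef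
    have hprefS : prefCount prof σ π = S.card := rfl
    rw [gt_iff_lt, hprefS] at hcon
    have hS3 : 3 ≤ S.card := by omega
    have hS4 : S.card ≤ 4 := by
      have := Finset.card_le_univ S
      simpa using this
    have hsub1 : (∑ v ∈ S, A v) + S.card ≤ D.card := by
      have e : (∑ v ∈ S, A v) + S.card = ∑ v ∈ S, (A v + 1) := by
        rw [Finset.sum_add_distrib, Finset.sum_const, smul_eq_mul, mul_one]
      rw [e]
      calc ∑ v ∈ S, (A v + 1) ≤ ∑ v ∈ S, B v := by
            refine Finset.sum_le_sum fun v hv => ?_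
            have h1 := hk v
            have h2 : kendall σ (prof v) < kendall π (prof v) := by
              rw [hSdef] at hv
              exact (Finset.mem_filter.1 hv).2
            omega
        _ ≤ ∑ v : Fin 4, B v := Finset.sum_le_sum_of_subset (Finset.subset_univ S)
        _ ≤ D.card := hBsum
    have hsub2 : (∑ v ∈ Finset.univ \ S, A v) ≤ D.card := by
      have hc : (Finset.univ \ S).card ≤ 1 := by
        rw [Finset.card_sdiff_of_subset (Finset.subset_univ S)]
        simp only [Finset.card_univ, Fintype.card_fin]
        omega
      calc (∑ v ∈ Finset.univ \ S, A v) ≤ (Finset.univ \ S).card • D.card := by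
            refine Finset.sum_le_card_nsmul _ _ _ fun v _ => ?_
            simp only [hA]
            exact Finset.card_filter_le _ _
        _ = (Finset.univ \ S).card * D.card := smul_eq_mul ..
        _ ≤ 1 * D.card := Nat.mul_le_mul_right _ hc
        _ = D.card := one_mul _
    have htotal : (∑ v ∈ Finset.univ \ S, A v) + (∑ v ∈ S, A v) + (∑ v : Fin 4, B v)
        = 4 * D.card := by
      rw [Finset.sum_sdiff (Finset.subset_univ S)]
      rw [← Finset.sum_add_distrib]
      rw [Finset.sum_congr rfl fun v _ => hABsum v]
      rw [Finset.sum_const, Finset.card_univ, Fintype.card_fin, smul_eq_mul]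
    omega
  have hback : ∀ π : Ranking m, absPop prof π → topSorted prof π := by
    intro π hpop
    by_contra hnts
    have hadjinv : ∃ x y : Fin m, (π x : ℕ) + 1 = (π y : ℕ) ∧ maj prof y x := by
      by_contra hno
      push_neg at hno
      have hadj : ∀ x y : Fin m, (π x : ℕ) + 1 = (π y : ℕ) → maj prof x y := by
        intro x y h
        have hxy : x ≠ y := by intro h'; rw [h'] at h; omega
        rcases htour x y hxy with h' | h'
        · exact h'
        · exact absurd h' (hno x y h)
      have hchain : ∀ k : ℕ, ∀ a b : Fin m,
          (π a : ℕ) + k + 1 = (π b : ℕ) → maj prof a b := by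
        intro k
        induction k with
        | zero => exact fun a b h => hadj a b (by omega)
        | succ k ih =>
          intro a b h
          have hlt : (π a : ℕ) + 1 < m := by
            have := (π b).isLt
            omega
          have hπc : (π (π.symm ⟨(π a : ℕ) + 1, hlt⟩) : ℕ) = (π a : ℕ) + 1 := by simp
          exact maj_trans htour hacyc (hadj a _ hπc.symm) (ih _ b (by rw [hπc]; omega))
      apply hnts
      intro a b hab
      by_contra hnlt
      have hne : a ≠ b := by rintro rfl; exact maj_irrefl hacyc a hab
      have hba : (π b : ℕ) < (π a : ℕ) := by
        have h1 : ¬ ((π a : ℕ) < (π b : ℕ)) := by rw [← Fin.lt_def]; exact hnlt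
        have h2 : (π a : ℕ) ≠ (π b : ℕ) :=
          fun h => hne (π.injective (Fin.val_injective h))
        omega
      exact maj_asymm hacyc hab (hchain ((π a : ℕ) - (π b : ℕ) - 1) b a (by omega))
    obtain ⟨x, y, hadj, hmaj⟩ := hadjinv
    set σ := (Equiv.swap x y).trans π with hσ
    have hxy : x ≠ y := by intro h; rw [h] at hadj; omega
    have hD := Dset_swap π hadj
    refine hpop σ ?_
    have hsub : (Finset.univ.filter (fun v : Fin 4 => prof v y < prof v x))
        ⊆ Finset.univ.filter
          (fun v : Fin 4 => kendall σ (prof v) < kendall π (prof v)) := by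
      intro v hv
      simp only [Finset.mem_filter, Finset.mem_univ, true_and] at hv ⊢
      have hk := kendall_decomp π σ (prof v)
      have hπxy : π x < π y := by rw [Fin.lt_def]; omega
      have hvxy : ¬ (prof v x < prof v y) := lt_asymm hv
      rcases lt_or_gt_of_ne hxy with hlt | hlt
      · have hDs : Dset π σ = {((x, y) : Fin m × Fin m)} := by
          rw [hD, Finset.filter_insert, Finset.filter_singleton]
          simp [hlt, asymm hlt]
        rw [hDs] at hk
        rw [Finset.filter_singleton, Finset.filter_singleton] at hk
        simp only [hπxy, hvxy, iff_true, iff_false, not_true_eq_false, not_false_eq_true,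
          if_true, if_false, Finset.card_singleton, Finset.card_empty] at hk
        omega
      · have hDs : Dset π σ = {((y, x) : Fin m × Fin m)} := by
          rw [hD, Finset.filter_insert, Finset.filter_singleton]
          simp [hlt, asymm hlt]
        rw [hDs] at hk
        rw [Finset.filter_singleton, Finset.filter_singleton] at hk
        have hπyx : ¬ (π y < π x) := lt_asymm hπxy
        simp only [hπyx, hv, iff_true, iff_false, false_iff, not_true_eq_false,
          not_false_eq_true, not_not, if_true, if_false,
          Finset.card_singleton, Finset.card_empty] at hk
        omega
    have h3 : 3 ≤ (Finset.univ.filter (fun v : Fin 4 => prof v y < prof v x)).card := by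
      have h' : 2 * (Finset.univ.filter
          (fun v : Fin 4 => prof v y < prof v x)).card > 4 := hmaj
      omega
    have hpc : 3 ≤ prefCount prof σ π := le_trans h3 (Finset.card_le_card hsub)
    show 2 * prefCount prof σ π > 4
    omega
  refine ⟨⟨topPerm prof htour hacyc,
    fun a b h => topPerm_mono prof htour hacyc h, ?_⟩,
    fun π => ⟨hforward π, hback π⟩⟩
  intro τ hτ
  apply perm_eq_of_lt_iff
  intro a b
  rcases eq_or_ne a b with rfl | hne
  · simp
  · rcases htour a b hne with h | h
    · exact iff_of_true (hτ a b h) (topPerm_mono prof htour hacyc h)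
    · exact iff_of_false (lt_asymm (hτ b a h)) (lt_asymm (topPerm_mono prof htour hacyc h))
end
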